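/- arXiv:1605.06647 — 5 statements merged into one kernel-verified Lean document; each statement's English description precedes it below -/
import Mathlib

section
/- Let G = (V1, V2, V3; E) be a balanced tripartite graph with |V1| = |V2| = |V3| = M, such that every vertex is adjacent to at least (3/4)M vertices in each of the other two classes. Then G contains M pairwise vertex-disjoint triangles (i.e., a perfect triangle tiling). -/
/-!
If every vertex of a balanced bipartite graph on `M + M` vertices sees at least half of the other
side, Hall's condition holds, so there is a perfect matching `f` of `P 0` with `P 1`.
Then join each matched pair `(u, f u)` to the common neighbours of `u` and `f u` in `P 2`: two
subsets of an `M`-set of size at least `3M/4` meet in at least `M/2` elements, so the half-degree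
condition holds again on both sides, and a second perfect matching completes the `M` triangles.
-/

open Finset

theorem exists_equiv_forall_rel_of_half_degree {α β : Type*} [Fintype α] [Fintype β]
    (r : α → β → Prop) [DecidableRel r] (n : ℕ)
    (hα : Fintype.card α = n) (hβ : Fintype.card β = n)
    (hdeg_left : ∀ a, n ≤ 2 * #{b | r a b}) (hdeg_right : ∀ b, n ≤ 2 * #{a | r a b}) :
    ∃ e : α ≃ β, ∀ a, r a (e a) := by
  classical
  obtain ⟨f, hf_inj, hf⟩ := (Fintype.all_card_le_filter_rel_iff_exists_injective r).1 fun A => by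
    rcases A.eq_empty_or_nonempty with rfl | ⟨a, ha⟩
    · simp
    by_cases hA : 2 * #A ≤ n
    · calc #A ≤ #{b | r a b} := by have := hdeg_left a; omega
        _ ≤ #{b | ∃ a ∈ A, r a b} := card_le_card fun b hb => by
          simp only [mem_filter, mem_univ, true_and] at hb ⊢
          exact ⟨a, ha, hb⟩
    · -- Each `b` has more than `n - #A` neighbours, so one of them lies in `A`.
      have h_univ : ({b | ∃ a ∈ A, r a b} : Finset β) = univ := by
        refine eq_univ_iff_forall.2 fun b => ?_
        have h_meet : ¬ Disjoint ({a | r a b} : Finset α) A := fun h => by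
          have := card_union_of_disjoint h
          have := card_le_univ (({a | r a b} : Finset α) ∪ A)
          have := hdeg_right b
          omega
        obtain ⟨a, ha_rel, ha⟩ := not_disjoint_iff.1 h_meet
        simp only [mem_filter, mem_univ, true_and] at ha_rel ⊢
        exact ⟨a, ha, ha_rel⟩
      rw [h_univ, card_univ, hβ, ← hα]
      exact card_le_univ A
  have hf_bij := (Fintype.bijective_iff_injective_and_card f).2 ⟨hf_inj, hα.trans hβ.symm⟩
  exact ⟨.ofBijective f hf_bij, hf⟩

theorem le_two_mul_card_inter_of_three_mul_le {α : Type*} [Fintype α] [DecidableEq α]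
    {s t : Finset α} {n : ℕ} (hn : Fintype.card α ≤ n)
    (hs : 3 * n ≤ 4 * #s) (ht : 3 * n ≤ 4 * #t) : n ≤ 2 * #(s ∩ t) := by
  have := card_inter_add_card_union s t
  have := card_le_univ (s ∪ t)
  omega

theorem card_filter_univ_coe {V : Type*} (A : Finset V) (p : V → Prop) [DecidablePred p] :
    #{u : A | p u} = #(A.filter p) := by
  rw [univ_eq_attach, filter_attach, card_map, card_attach]

theorem card_filter_comp_equiv {α β : Type*} [Fintype α] [Fintype β] (e : α ≃ β)
    (p : β → Prop) [DecidablePred p] : #{a | p (e a)} = #{b | p b} := by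
  rw [← Fintype.card_subtype, ← Fintype.card_subtype]
  exact Fintype.card_congr (e.subtypeEquiv fun _ => Iff.rfl)

theorem SimpleGraph.exists_triangle_tiling_of_equiv {V : Type*} [DecidableEq V]
    (G : SimpleGraph V) {A B C : Finset V}
    (hAB : Disjoint A B) (hAC : Disjoint A C) (hBC : Disjoint B C) (f : A ≃ B) (g : A ≃ C)
    (hf : ∀ a : A, G.Adj a (f a)) (hg : ∀ a : A, G.Adj a (g a))
    (hfg : ∀ a : A, G.Adj (f a) (g a)) :
    ∃ T : Finset (Finset V), #T = #A ∧ (∀ s ∈ T, G.IsNClique 3 s) ∧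
      (T : Set (Finset V)).PairwiseDisjoint id ∧ ∀ v ∈ A ∪ B ∪ C, ∃ s ∈ T, v ∈ s := by
  set tri : A → Finset V := fun a => {↑a, ↑(f a), ↑(g a)} with htri
  have eq_of_mem_tri : ∀ {x a a'}, x ∈ tri a → x ∈ tri a' → a = a' := by
    intro x a a' h h'
    have ne_of_disjoint : ∀ {X Y : Finset V}, Disjoint X Y → ∀ (x : X) (y : Y), (x : V) ≠ y :=
      fun hXY x y hxy => Finset.disjoint_left.1 hXY x.2 (hxy ▸ y.2)
    simp only [htri, mem_insert, mem_singleton] at h h'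
    rcases h with rfl | rfl | rfl <;> rcases h' with h' | h' | h'
    all_goals first
      | exact Subtype.ext h'
      | exact f.injective (Subtype.ext h')
      | exact g.injective (Subtype.ext h')
      | exact absurd h' (ne_of_disjoint hAB _ _) | exact absurd h'.symm (ne_of_disjoint hAB _ _)
      | exact absurd h' (ne_of_disjoint hAC _ _) | exact absurd h'.symm (ne_of_disjoint hAC _ _)
      | exact absurd h' (ne_of_disjoint hBC _ _) | exact absurd h'.symm (ne_of_disjoint hBC _ _)
  have mem_tri_self : ∀ a, (a : V) ∈ tri a := fun a => by simp [htri]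
  have tri_inj : Function.Injective tri := fun a a' h =>
    eq_of_mem_tri (mem_tri_self a) (h ▸ mem_tri_self a)
  refine ⟨univ.image tri, ?_, ?_, ?_, ?_⟩
  · rw [card_image_of_injective _ tri_inj, card_univ, Fintype.card_coe]
  · simp only [mem_image, mem_univ, true_and, forall_exists_index, forall_apply_eq_imp_iff]
    exact fun a => SimpleGraph.is3Clique_triple_iff.2 ⟨hf a, hg a, hfg a⟩
  · simp only [coe_image, coe_univ, Set.image_univ]
    rintro _ ⟨a, rfl⟩ _ ⟨a', rfl⟩ hne
    exact Finset.disjoint_left.2 fun _ hx hx' => hne (congrArg tri (eq_of_mem_tri hx hx'))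
  · simp only [mem_union, mem_image, mem_univ, true_and, exists_exists_eq_and]
    rintro v ((hv | hv) | hv)
    · exact ⟨⟨v, hv⟩, mem_tri_self _⟩
    · exact ⟨f.symm ⟨v, hv⟩, by simp [htri]⟩
    · exact ⟨g.symm ⟨v, hv⟩, by simp [htri]⟩

theorem stmt_0_general {V : Type*}
    (G : SimpleGraph V) [DecidableRel G.Adj] (M : ℕ)
    (P : Fin 3 → Finset V)
    (hdisj : ∀ i j, i ≠ j → Disjoint (P i) (P j))
    (hcover : ∀ v : V, ∃ i, v ∈ P i)
    (hcard : ∀ i, (P i).card = M)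
    (hdeg : ∀ i j, i ≠ j → ∀ v ∈ P i,
      4 * ((P j).filter (G.Adj v)).card ≥ 3 * M) :
    ∃ T : Finset (Finset V), T.card = M ∧ (∀ s ∈ T, G.IsNClique 3 s) ∧
      (T : Set (Finset V)).PairwiseDisjoint id ∧ ∀ v : V, ∃ s ∈ T, v ∈ s := by
  classical
  have hcardM : ∀ i, Fintype.card (P i) = M := fun i => by rw [Fintype.card_coe, hcard]
  have deg : ∀ i j, i ≠ j → ∀ v ∈ P i, 3 * M ≤ 4 * #{w : P j | G.Adj v w} :=
    fun i j hij v hv => by rw [card_filter_univ_coe]; exact hdeg i j hij v hv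
  have deg' : ∀ i j, i ≠ j → ∀ v ∈ P i, 3 * M ≤ 4 * #{w : P j | G.Adj w v} :=
    fun i j hij v hv => by simpa only [G.adj_comm] using deg i j hij v hv
  obtain ⟨f, hf⟩ := exists_equiv_forall_rel_of_half_degree
    (fun (u : P 0) (v : P 1) => G.Adj u v) M (hcardM 0) (hcardM 1)
    (fun u => by have := deg 0 1 (by decide) u u.2; omega)
    (fun v => by have := deg' 1 0 (by decide) v v.2; omega)
  obtain ⟨g, hg⟩ := exists_equiv_forall_rel_of_half_degree
    (fun (u : P 0) (w : P 2) => G.Adj u w ∧ G.Adj (f u) w) M (hcardM 0) (hcardM 2)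
    (fun u => by
      rw [filter_and]
      exact le_two_mul_card_inter_of_three_mul_le (hcardM 2).le
        (deg 0 2 (by decide) u u.2) (deg 1 2 (by decide) (f u) (f u).2))
    (fun w => by
      rw [filter_and]
      refine le_two_mul_card_inter_of_three_mul_le (hcardM 0).le (deg' 2 0 (by decide) w w.2) ?_
      rw [card_filter_comp_equiv f (fun v : P 1 => G.Adj v w)]
      exact deg' 2 1 (by decide) w w.2)
  obtain ⟨T, hT_card, hT_clique, hT_disj, hT_cover⟩ := G.exists_triangle_tiling_of_equiv
    (hdisj 0 1 (by decide)) (hdisj 0 2 (by decide)) (hdisj 1 2 (by decide)) f g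
    hf (fun u => (hg u).1) (fun u => (hg u).2)
  refine ⟨T, hT_card.trans (hcard 0), hT_clique, hT_disj, fun v => hT_cover v ?_⟩
  obtain ⟨i, hi⟩ := hcover v
  fin_cases i <;> simp_all

/-- A balanced tripartite graph with classes of size `M` in which every vertex has at
least `(3/4)M` neighbors in each of the other classes has a perfect triangle tiling. -/
theorem stmt_0 {V : Type*} [Fintype V] [DecidableEq V]
    (G : SimpleGraph V) [DecidableRel G.Adj] (M : ℕ)
    (P : Fin 3 → Finset V)
    (hdisj : ∀ i j, i ≠ j → Disjoint (P i) (P j))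
    (hcover : ∀ v : V, ∃ i, v ∈ P i)
    (hcard : ∀ i, (P i).card = M)
    (htripartite : ∀ i, ∀ u ∈ P i, ∀ v ∈ P i, ¬ G.Adj u v)
    (hdeg : ∀ i j, i ≠ j → ∀ v ∈ P i,
      4 * ((P j).filter (G.Adj v)).card ≥ 3 * M) :
    ∃ T : Finset (Finset V), T.card = M ∧ (∀ s ∈ T, G.IsNClique 3 s) ∧
      (T : Set (Finset V)).PairwiseDisjoint id ∧ ∀ v : V, ∃ s ∈ T, v ∈ s :=
  stmt_0_general G M P hdisj hcover hcard hdeg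
end

section
/- For every integer k ≥ 3, if k is even then the graph Γ_k can be partitioned into k vertex-disjoint copies of K_k, and if k is odd then Γ_k cannot be so partitioned. -/
/-!
A copy of `K_k` in `Γ_k` has at most one vertex in each of the first `k - 2` columns, hence at
least two in the last two columns, and these all lie in the same column. If `k` copies partition
`Γ_k` and `a` of them meet column `k - 2`, counting the `k` vertices of each of the last two
columns gives `k ≥ 2a` and `k ≥ 2(k - a)`, so `k = 2a` is even.

For even `k`, the copies are graphs of maps from rows to columns: the `t`-th copy takes column
`t + i (mod k)` in row `i`, except that the two values `k - 2` and `k - 1` are both replaced by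
`k - 2 + (t mod 2)`. In row `i` the two indices `t` landing in the last two columns are
consecutive mod `k`, hence of different parity as `k` is even, so every vertex is still covered
exactly once.
-/

/-- The graph `Γ_k` on vertices `h_{i,j}`, `i, j ∈ Fin k` (0-indexed):
`h_{i,j} ~ h_{i',j'}` iff `i ≠ i'`, `j ≠ j'` and one of `j, j'` is `< k - 2`;
additionally `h_{i,j} ~ h_{i',j}` for `i ≠ i'` whenever `j ≥ k - 2`. -/
def gammaGraph (k : ℕ) : SimpleGraph (Fin k × Fin k) where
  Adj p q := p.1 ≠ q.1 ∧
    ((p.2 ≠ q.2 ∧ (p.2.val < k - 2 ∨ q.2.val < k - 2)) ∨ (p.2 = q.2 ∧ k - 2 ≤ p.2.val))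
  symm := by
    constructor
    rintro p q ⟨h1, h2⟩
    refine ⟨h1.symm, ?_⟩
    rcases h2 with ⟨hne, hor⟩ | ⟨heq, hge⟩
    · exact Or.inl ⟨hne.symm, hor.symm⟩
    · exact Or.inr ⟨heq.symm, heq ▸ hge⟩
  loopless := ⟨fun _ h => h.1 rfl⟩

open Finset

theorem Finset.even_card_of_sum_eq_card {ι : Type*} {P : Finset ι} {c d : ι → ℕ}
    (hcd : ∀ i ∈ P, (c i = 0 ∧ 2 ≤ d i) ∨ (2 ≤ c i ∧ d i = 0))
    (hc : ∑ i ∈ P, c i = #P) (hd : ∑ i ∈ P, d i = #P) : Even #P := by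
  classical
  have hA : 2 * #(P.filter (c · ≠ 0)) ≤ #P := calc
    2 * #(P.filter (c · ≠ 0)) = ∑ i ∈ P.filter (c · ≠ 0), 2 := by simp [mul_comm]
    _ ≤ ∑ i ∈ P.filter (c · ≠ 0), c i :=
      sum_le_sum fun i hi ↦ by have := hcd i (mem_filter.1 hi).1; grind
    _ = #P := by rw [sum_filter_ne_zero, hc]
  have hB : 2 * #(P.filter (¬c · ≠ 0)) ≤ #P := calc
    2 * #(P.filter (¬c · ≠ 0)) = ∑ i ∈ P.filter (¬c · ≠ 0), 2 := by simp [mul_comm]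
    _ ≤ ∑ i ∈ P.filter (¬c · ≠ 0), d i :=
      sum_le_sum fun i hi ↦ by have := hcd i (mem_filter.1 hi).1; grind
    _ ≤ #P := hd ▸ sum_le_sum_of_subset (filter_subset _ _)
  have := card_filter_add_card_filter_not (s := P) (c · ≠ 0)
  exact ⟨#(P.filter (c · ≠ 0)), by omega⟩

theorem Finset.sum_card_filter_of_pairwiseDisjoint {α : Type*} [Fintype α] [DecidableEq α]
    {P : Finset (Finset α)} (hdisj : (P : Set (Finset α)).PairwiseDisjoint id)
    (hcover : ∀ v, ∃ s ∈ P, v ∈ s) (p : α → Prop) [DecidablePred p] :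
    ∑ s ∈ P, #(s.filter p) = #(univ.filter p) := by
  rw [← card_biUnion (t := (·.filter p)) fun s hs t ht hst ↦
    disjoint_filter_filter (hdisj hs ht hst)]
  congr 1
  ext v
  simp only [mem_biUnion, mem_filter, mem_univ, true_and]
  exact ⟨fun ⟨_, _, _, hv⟩ ↦ hv, fun hv ↦ (hcover v).imp fun s ⟨hs, hvs⟩ ↦ ⟨hs, hvs, hv⟩⟩

section graphFinset

variable {α β : Type*} [Fintype α] [DecidableEq α] [DecidableEq β]

def graphFinset (f : α → β) : Finset (α × β) :=
  univ.image fun a ↦ (a, f a)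

@[simp]
theorem mem_graphFinset {f : α → β} {v : α × β} : v ∈ graphFinset f ↔ f v.1 = v.2 := by
  simp only [graphFinset, mem_image, mem_univ, true_and]
  exact ⟨by rintro ⟨a, rfl⟩; rfl, fun h ↦ ⟨v.1, by rw [h]⟩⟩

theorem card_graphFinset (f : α → β) : #(graphFinset f) = Fintype.card α :=
  card_image_of_injective _ fun _ _ h ↦ congrArg Prod.fst h

theorem graphFinset_injective : Function.Injective (graphFinset : (α → β) → Finset (α × β)) :=
  fun f g h ↦ funext fun a ↦
    (mem_graphFinset.1 (h ▸ mem_graphFinset.2 rfl : (a, f a) ∈ graphFinset g)).symm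

theorem disjoint_graphFinset {f g : α → β} (h : ∀ a, f a ≠ g a) :
    Disjoint (graphFinset f) (graphFinset g) :=
  disjoint_left.2 fun v hf hg ↦ h v.1 ((mem_graphFinset.1 hf).trans (mem_graphFinset.1 hg).symm)

theorem SimpleGraph.isClique_graphFinset {G : SimpleGraph (α × β)} {f : α → β}
    (h : ∀ a a', a ≠ a' → G.Adj (a, f a) (a', f a')) :
    G.IsClique (graphFinset f : Set (α × β)) := by
  intro v hv w hw hvw
  rw [mem_coe, mem_graphFinset] at hv hw
  rw [← Prod.mk.eta (p := v), ← Prod.mk.eta (p := w), ← hv, ← hw]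
  exact h _ _ fun e ↦ hvw (Prod.ext e (by rw [← hv, ← hw, e]))

end graphFinset

namespace gammaGraph

variable {k : ℕ}

theorem adj_iff {p q : Fin k × Fin k} : (gammaGraph k).Adj p q ↔ p.1 ≠ q.1 ∧
    ((p.2 ≠ q.2 ∧ (p.2.val < k - 2 ∨ q.2.val < k - 2)) ∨ (p.2 = q.2 ∧ k - 2 ≤ p.2.val)) :=
  Iff.rfl

theorem card_filter_snd_lt_le {s : Finset (Fin k × Fin k)}
    (hs : (gammaGraph k).IsClique (s : Set _)) :
    #(s.filter (·.2.val < k - 2)) ≤ k - 2 := calc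
  _ ≤ #(univ.filter fun j : Fin k ↦ j.val < k - 2) := by
    refine card_le_card_of_injOn Prod.snd (fun v hv ↦ by simp_all) fun v hv w hw hvw ↦ ?_
    by_contra hne
    have := hs (mem_filter.1 hv).1 (mem_filter.1 hw).1 hne
    simp only [mem_coe, mem_filter] at hv hw
    rw [adj_iff] at this
    omega
  _ = k - 2 := by rw [Fin.card_filter_val_lt]; omega

theorem snd_eq_of_sub_two_le {s : Finset (Fin k × Fin k)}
    (hs : (gammaGraph k).IsClique (s : Set _)) {v w : Fin k × Fin k} (hv : v ∈ s) (hw : w ∈ s)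
    (hv₂ : k - 2 ≤ v.2.val) (hw₂ : k - 2 ≤ w.2.val) :
    v.2 = w.2 := by
  by_contra hne
  have := hs hv hw fun e ↦ hne (e ▸ rfl)
  rw [adj_iff] at this
  omega

theorem exists_col_of_isNClique (hk : 2 ≤ k) {s : Finset (Fin k × Fin k)}
    (hs : (gammaGraph k).IsNClique k s) :
    ∃ j : Fin k, k - 2 ≤ j.val ∧ 2 ≤ #(s.filter (·.2 = j)) ∧
      ∀ v ∈ s, k - 2 ≤ v.2.val → v.2 = j := by
  have hsmall := card_filter_snd_lt_le hs.isClique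
  have hsplit := card_filter_add_card_filter_not (s := s) (·.2.val < k - 2)
  have hcard := hs.card_eq
  obtain ⟨v, hv⟩ : (s.filter (¬·.2.val < k - 2)).Nonempty := by
    rw [← card_pos]; omega
  rw [mem_filter, not_lt] at hv
  refine ⟨v.2, hv.2, ?_, fun w hw hw₂ ↦ snd_eq_of_sub_two_le hs.isClique hw hv.1 hw₂ hv.2⟩
  calc 2 ≤ #(s.filter (¬·.2.val < k - 2)) := by omega
    _ ≤ #(s.filter (·.2 = v.2)) := card_le_card fun w hw ↦ by
      rw [mem_filter, not_lt] at hw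
      exact mem_filter.2 ⟨hw.1, snd_eq_of_sub_two_le hs.isClique hw.1 hv.1 hw.2 hv.2⟩

theorem not_exists_partition_of_odd (hk : 2 ≤ k) (hodd : Odd k) :
    ¬ ∃ P : Finset (Finset (Fin k × Fin k)), P.card = k ∧
      (∀ s ∈ P, (gammaGraph k).IsNClique k s) ∧
      (P : Set (Finset (Fin k × Fin k))).PairwiseDisjoint id ∧
      ∀ v : Fin k × Fin k, ∃ s ∈ P, v ∈ s := by
  rintro ⟨P, hcard, hclique, hdisj, hcover⟩
  have hcol (j : Fin k) : ∑ s ∈ P, #(s.filter (·.2 = j)) = #P := by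
    rw [sum_card_filter_of_pairwiseDisjoint hdisj hcover, hcard,
      show univ.filter (·.2 = j) = univ ×ˢ {j} by ext ⟨a, b⟩; simp [eq_comm]]
    simp
  set jA : Fin k := ⟨k - 2, by omega⟩
  set jB : Fin k := ⟨k - 1, by omega⟩
  refine Nat.not_even_iff_odd.2 hodd <| hcard ▸ even_card_of_sum_eq_card ?_ (hcol jA) (hcol jB)
  intro s hs
  obtain ⟨j, hj, htwo, hsame⟩ := exists_col_of_isNClique hk (hclique s hs)
  have hempty (j' : Fin k) (hj' : k - 2 ≤ j'.val) (hne : j' ≠ j) :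
      #(s.filter (·.2 = j')) = 0 := by
    rw [card_eq_zero, filter_eq_empty_iff]
    exact fun v hv hvj ↦ hne (hvj ▸ hsame v hv (hvj ▸ hj'))
  rcases (show j = jA ∨ j = jB by simp only [jA, jB, Fin.ext_iff]; omega) with rfl | rfl
  · exact Or.inr ⟨htwo, hempty jB (by simp [jB]; omega) (by simp [jA, jB, Fin.ext_iff]; omega)⟩
  · exact Or.inl ⟨hempty jA (by simp [jA]) (by simp [jA, jB, Fin.ext_iff]; omega), htwo⟩

def cliqueCol (k : ℕ) (t i : Fin k) : Fin k :=
  if (t + i).val < k - 2 then t + i else ⟨k - 2 + t.val % 2, by omega⟩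

theorem adj_cliqueCol (t : Fin k) {i i' : Fin k} (hne : i ≠ i') :
    (gammaGraph k).Adj (i, cliqueCol k t i) (i', cliqueCol k t i') := by
  refine ⟨hne, ?_⟩
  unfold cliqueCol
  split_ifs with h h'
  · exact Or.inl ⟨fun e ↦ hne (add_left_cancel e), Or.inl h⟩
  · exact Or.inl ⟨by simp only [ne_eq, Fin.ext_iff]; omega, Or.inl h⟩
  · exact Or.inl ⟨by simp only [ne_eq, Fin.ext_iff]; omega, Or.inr ‹_›⟩
  · exact Or.inr ⟨rfl, Nat.le_add_right _ _⟩

theorem cliqueCol_injective (hk : Even k) (i : Fin k) :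
    Function.Injective (cliqueCol k · i) := by
  intro t t' h
  have hpar (t : Fin k) : (t + i).val % 2 = (t.val + i.val) % 2 := by
    rw [Fin.val_add, Nat.mod_mod_of_dvd _ hk.two_dvd]
  simp only [cliqueCol] at h
  split_ifs at h with h₁ h₂ h₂
  · exact add_right_cancel h
  · simp only [Fin.ext_iff] at h; omega
  · simp only [Fin.ext_iff] at h; omega
  · refine add_right_cancel (b := i) (Fin.ext ?_)
    have := hpar t; have := hpar t'; have := (t + i).isLt; have := (t' + i).isLt
    simp only [Fin.ext_iff] at h
    omega

theorem exists_partition_of_even (hk : Even k) :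
    ∃ P : Finset (Finset (Fin k × Fin k)), P.card = k ∧
      (∀ s ∈ P, (gammaGraph k).IsNClique k s) ∧
      (P : Set (Finset (Fin k × Fin k))).PairwiseDisjoint id ∧
      ∀ v : Fin k × Fin k, ∃ s ∈ P, v ∈ s := by
  have hbij (i : Fin k) : Function.Bijective (cliqueCol k · i) :=
    Finite.injective_iff_bijective.1 (cliqueCol_injective hk i)
  refine ⟨univ.image fun t ↦ graphFinset (cliqueCol k t), ?_, ?_, ?_, fun v ↦ ?_⟩
  · have hinj : Function.Injective fun t ↦ graphFinset (cliqueCol k t) :=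
      graphFinset_injective.comp fun t t' h ↦ (hbij t).1 (congrFun h t)
    simp [card_image_of_injective _ hinj]
  · simp only [mem_image, mem_univ, true_and, forall_exists_index, forall_apply_eq_imp_iff]
    exact fun t ↦ ⟨SimpleGraph.isClique_graphFinset fun _ _ ↦ adj_cliqueCol t,
      by simp [card_graphFinset]⟩
  · rw [coe_image, coe_univ]
    rintro _ ⟨t, -, rfl⟩ _ ⟨t', -, rfl⟩ hne
    exact disjoint_graphFinset fun i e ↦ hne (by rw [(hbij i).1 e])
  · obtain ⟨t, ht⟩ := (hbij v.1).2 v.2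
    exact ⟨_, mem_image_of_mem _ (mem_univ t), mem_graphFinset.2 ht⟩

end gammaGraph

/-- If `k ≥ 3` is even then `Γ_k` can be partitioned into `k` vertex-disjoint copies
of `K_k`, and if `k` is odd it cannot. -/
theorem stmt_7 (k : ℕ) (hk : 3 ≤ k) :
    (Even k → ∃ P : Finset (Finset (Fin k × Fin k)), P.card = k ∧
      (∀ s ∈ P, (gammaGraph k).IsNClique k s) ∧
      (P : Set (Finset (Fin k × Fin k))).PairwiseDisjoint id ∧
      ∀ v : Fin k × Fin k, ∃ s ∈ P, v ∈ s) ∧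
    (Odd k → ¬ ∃ P : Finset (Finset (Fin k × Fin k)), P.card = k ∧
      (∀ s ∈ P, (gammaGraph k).IsNClique k s) ∧
      (P : Set (Finset (Fin k × Fin k))).PairwiseDisjoint id ∧
      ∀ v : Fin k × Fin k, ∃ s ∈ P, v ∈ s) :=
  ⟨gammaGraph.exists_partition_of_even, gammaGraph.not_exists_partition_of_odd (by omega)⟩
end

section
/- The blow-up graph Γ_3(t) (each vertex of Γ_3 replaced by t vertices and each edge by a complete bipartite graph K_{t,t}) admits a perfect triangle tiling (3t vertex-disjoint triangles covering all 9t vertices) if and only if t is even. -/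
/-- The blow-up `G(t)`: each vertex replaced by `t` vertices, each edge by `K_{t,t}`. -/
def blowup {V : Type*} (G : SimpleGraph V) (t : ℕ) : SimpleGraph (V × Fin t) :=
  SimpleGraph.comap Prod.fst G

/-!
A triangle of `Γ₃` has its vertices in three different rows; column `0` is independent, columns
`1` and `2` are cliques and there are no edges between them. So a triangle of `Γ₃(t)` has at most
one vertex in column `0`, and if it has one, its other two vertices lie together in column `1` or
in column `2`. A tiling has `9t / 3 = 3t` triangles and column `0` has `3t` vertices, so every
triangle meets column `0` exactly once, and column `1`, of size `3t`, is covered in pairs: `t` is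
even. Conversely, `Γ₃(2)` has an explicit tiling, and tilings of `G(a)` and `G(b)` combine into
one of `G(a + b)`.
-/

open Finset

namespace SimpleGraph

variable {V V₁ V₂ W : Type*} {n : ℕ}

def IsCliqueTiling (G : SimpleGraph V) (n : ℕ) (T : Finset (Finset V)) : Prop :=
  (∀ s ∈ T, G.IsNClique n s) ∧ (T : Set (Finset V)).PairwiseDisjoint id ∧ ∀ v, ∃ s ∈ T, v ∈ s

theorem IsNClique.map_of_embedding {G : SimpleGraph V} {H : SimpleGraph W} {s : Finset V}
    (h : G.IsNClique n s) (f : G ↪g H) : H.IsNClique n (s.map f.toEmbedding) :=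
  h.map.mono <| (map_le_iff_le_comap _ _ _).2 fun _ _ ↦ f.map_adj_iff.2

theorem isCliqueTiling_empty [IsEmpty V] (G : SimpleGraph V) (n : ℕ) : G.IsCliqueTiling n ∅ :=
  ⟨by simp, by simp, isEmptyElim⟩

namespace IsCliqueTiling

variable {G : SimpleGraph V} {T : Finset (Finset V)}

theorem sum_card_filter [Fintype V] (hT : G.IsCliqueTiling n T) (p : V → Prop)
    [DecidablePred p] : ∑ s ∈ T, #{v ∈ s | p v} = #{v | p v} := by
  classical
  have huniv : (univ : Finset V) = T.biUnion id := by
    ext v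
    simpa using hT.2.2 v
  rw [huniv, filter_biUnion, card_biUnion]
  · rfl
  · exact fun s hs s' hs' hne ↦ disjoint_filter_filter (hT.2.1 hs hs' hne)

theorem card_mul_eq_card [Fintype V] (hT : G.IsCliqueTiling n T) : #T * n = Fintype.card V := by
  classical
  have h := hT.sum_card_filter fun _ ↦ True
  simp only [filter_true] at h
  rw [sum_congr rfl fun s hs ↦ (hT.1 s hs).card_eq, sum_const, smul_eq_mul] at h
  rw [h, card_univ]

theorem pairwiseDisjoint_image_map [DecidableEq W] {H : SimpleGraph W}
    (hT : G.IsCliqueTiling n T) (f : G ↪g H) :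
    (↑(T.image (Finset.map f.toEmbedding)) : Set (Finset W)).PairwiseDisjoint id := by
  rw [coe_image, (Finset.map_injective f.toEmbedding).injOn.pairwiseDisjoint_image]
  exact fun s hs s' hs' hne ↦ disjoint_map _ |>.2 (hT.2.1 hs hs' hne)

theorem union_map [DecidableEq W] {G₁ : SimpleGraph V₁} {G₂ : SimpleGraph V₂}
    {H : SimpleGraph W} {T₁ : Finset (Finset V₁)} {T₂ : Finset (Finset V₂)}
    (f₁ : G₁ ↪g H) (f₂ : G₂ ↪g H) (hdisj : ∀ x y, f₁ x ≠ f₂ y)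
    (hcov : ∀ w, (∃ x, f₁ x = w) ∨ ∃ y, f₂ y = w)
    (h₁ : G₁.IsCliqueTiling n T₁) (h₂ : G₂.IsCliqueTiling n T₂) :
    H.IsCliqueTiling n
      (T₁.image (Finset.map f₁.toEmbedding) ∪ T₂.image (Finset.map f₂.toEmbedding)) := by
  refine ⟨?_, ?_, ?_⟩
  · simp only [mem_union, mem_image]
    rintro _ (⟨s, hs, rfl⟩ | ⟨s, hs, rfl⟩)
    exacts [(h₁.1 s hs).map_of_embedding f₁, (h₂.1 s hs).map_of_embedding f₂]
  · rw [coe_union]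
    refine (h₁.pairwiseDisjoint_image_map f₁).union (h₂.pairwiseDisjoint_image_map f₂) ?_
    simp only [coe_image, Set.mem_image, mem_coe]
    rintro _ ⟨s, -, rfl⟩ _ ⟨s', -, rfl⟩ -
    simp only [id, Finset.disjoint_left, Finset.mem_map]
    rintro _ ⟨x, -, rfl⟩ ⟨y, -, hxy⟩
    exact hdisj x y hxy.symm
  · intro w
    simp only [mem_union, mem_image]
    rcases hcov w with ⟨x, rfl⟩ | ⟨y, rfl⟩
    · obtain ⟨s, hs, hx⟩ := h₁.2.2 x
      exact ⟨_, .inl ⟨s, hs, rfl⟩, Finset.mem_map_of_mem _ hx⟩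
    · obtain ⟨s, hs, hy⟩ := h₂.2.2 y
      exact ⟨_, .inr ⟨s, hs, rfl⟩, Finset.mem_map_of_mem _ hy⟩

end IsCliqueTiling

section Blowup

variable {G : SimpleGraph V} {t : ℕ}

instance [DecidableRel G.Adj] : DecidableRel (blowup G t).Adj :=
  fun x y ↦ inferInstanceAs (Decidable (G.Adj x.1 y.1))

def blowupEmbedding (G : SimpleGraph V) {a b : ℕ} (f : Fin a ↪ Fin b) :
    blowup G a ↪g blowup G b where
  toEmbedding := (Function.Embedding.refl V).prodMap f
  map_rel_iff' := Iff.rfl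

theorem IsCliqueTiling.exists_blowup_add [DecidableEq V] {a b : ℕ}
    {T₁ : Finset (Finset (V × Fin a))} {T₂ : Finset (Finset (V × Fin b))}
    (h₁ : (blowup G a).IsCliqueTiling n T₁) (h₂ : (blowup G b).IsCliqueTiling n T₂) :
    ∃ T, (blowup G (a + b)).IsCliqueTiling n T := by
  refine ⟨_, h₁.union_map (blowupEmbedding G (Fin.castAddEmb b))
    (blowupEmbedding G (Fin.natAddEmb a)) ?_ ?_ h₂⟩
  · rintro ⟨v, i⟩ ⟨w, j⟩ h
    have : (i : ℕ) = a + j := congrArg (fun x ↦ (x.2 : ℕ)) h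
    omega
  · rintro ⟨v, k⟩
    refine Fin.addCases (fun i ↦ ?_) (fun j ↦ ?_) k
    exacts [.inl ⟨(v, i), rfl⟩, .inr ⟨(v, j), rfl⟩]

theorem IsNClique.injOn_fst {s : Finset (V × Fin t)} (h : (blowup G t).IsNClique n s) :
    Set.InjOn Prod.fst (s : Set (V × Fin t)) := fun _ hx _ hy hxy ↦
  by_contra fun hne ↦ (show G.Adj _ _ from h.isClique hx hy hne).ne hxy

theorem IsNClique.image_fst [DecidableEq V] {s : Finset (V × Fin t)}
    (h : (blowup G t).IsNClique n s) : G.IsNClique n (s.image Prod.fst) := by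
  refine ⟨?_, by rw [card_image_of_injOn h.injOn_fst, h.card_eq]⟩
  simp only [coe_image]
  rintro _ ⟨x, hx, rfl⟩ _ ⟨y, hy, rfl⟩ hne
  exact h.isClique hx hy fun e ↦ hne (congrArg _ e)

theorem IsNClique.card_filter_fst [DecidableEq V] {s : Finset (V × Fin t)}
    (h : (blowup G t).IsNClique n s) (p : V → Prop) [DecidablePred p] :
    #{v ∈ s | p v.1} = #{x ∈ s.image Prod.fst | p x} := by
  rw [filter_image, card_image_of_injOn (h.injOn_fst.mono (filter_subset _ _))]

end Blowup

end SimpleGraph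

open SimpleGraph

instance (k : ℕ) : DecidableRel (gammaGraph k).Adj := fun p q ↦
  inferInstanceAs (Decidable (p.1 ≠ q.1 ∧
    ((p.2 ≠ q.2 ∧ (p.2.val < k - 2 ∨ q.2.val < k - 2)) ∨ (p.2 = q.2 ∧ k - 2 ≤ p.2.val))))

theorem gammaGraph_three_triangle_columns {s : Finset (Fin 3 × Fin 3)}
    (hs : (gammaGraph 3).IsNClique 3 s) :
    #{x ∈ s | x.2 = 0} ≤ 1 ∧ (#{x ∈ s | x.2 = 0} = 1 → Even #{x ∈ s | x.2 = 1}) := by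
  obtain ⟨a, b, c, hab, hac, hbc, rfl⟩ := is3Clique_iff.1 hs
  revert a b c
  decide

theorem blowup_gammaGraph_three_triangle_columns {t : ℕ} {s : Finset ((Fin 3 × Fin 3) × Fin t)}
    (hs : (blowup (gammaGraph 3) t).IsNClique 3 s) :
    #{v ∈ s | v.1.2 = 0} ≤ 1 ∧ (#{v ∈ s | v.1.2 = 0} = 1 → Even #{v ∈ s | v.1.2 = 1}) := by
  rw [hs.card_filter_fst (·.2 = 0), hs.card_filter_fst (·.2 = 1)]
  exact gammaGraph_three_triangle_columns hs.image_fst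

theorem card_blowup_gammaGraph_three_column (t : ℕ) (j : Fin 3) :
    #{v : (Fin 3 × Fin 3) × Fin t | v.1.2 = j} = 3 * t := by
  rw [← univ_product_univ, filter_product_left fun x : Fin 3 × Fin 3 ↦ x.2 = j, card_product,
    card_univ, Fintype.card_fin]
  congr 1
  revert j
  decide

theorem even_of_isCliqueTiling_blowup_gammaGraph_three {t : ℕ}
    {T : Finset (Finset ((Fin 3 × Fin 3) × Fin t))}
    (hT : (blowup (gammaGraph 3) t).IsCliqueTiling 3 T) : Even t := by
  have hcols := fun s hs ↦ blowup_gammaGraph_three_triangle_columns (hT.1 s hs)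
  have hcard : #T = 3 * t := by
    have := hT.card_mul_eq_card
    simp only [Fintype.card_prod, Fintype.card_fin] at this
    omega
  -- there are as many triangles as column-`0` vertices, and each triangle contains at most one
  have hone : ∀ s ∈ T, #{v ∈ s | v.1.2 = 0} = 1 := by
    refine (sum_eq_sum_iff_of_le fun s hs ↦ (hcols s hs).1).1 ?_
    rw [hT.sum_card_filter, card_blowup_gammaGraph_three_column, sum_const, smul_eq_mul,
      mul_one, hcard]
  have heven : Even (3 * t) := by
    rw [← card_blowup_gammaGraph_three_column t 1, ← hT.sum_card_filter]
    exact even_sum _ fun s hs ↦ (hcols s hs).2 (hone s hs)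
  exact (Nat.even_mul.1 heven).resolve_left (by decide)

theorem exists_isCliqueTiling_blowup_gammaGraph_three_two :
    ∃ T, (blowup (gammaGraph 3) 2).IsCliqueTiling 3 T := by
  refine ⟨{{((0, 0), 0), ((1, 1), 0), ((2, 1), 1)}, {((1, 0), 0), ((2, 1), 0), ((0, 1), 1)},
    {((2, 0), 0), ((0, 1), 0), ((1, 1), 1)}, {((0, 0), 1), ((1, 2), 0), ((2, 2), 1)},
    {((1, 0), 1), ((2, 2), 0), ((0, 2), 1)}, {((2, 0), 1), ((0, 2), 0), ((1, 2), 1)}},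
    ?_, ?_, by decide⟩
  · simp only [mem_insert, mem_singleton, forall_eq_or_imp, forall_eq]
    refine ⟨?_, ?_, ?_, ?_, ?_, ?_⟩ <;> exact is3Clique_triple_iff.2 (by decide)
  · intro s hs s' hs'
    revert s s'
    decide

theorem exists_isCliqueTiling_blowup_gammaGraph_three_of_even {t : ℕ} (ht : Even t) :
    ∃ T, (blowup (gammaGraph 3) t).IsCliqueTiling 3 T := by
  obtain ⟨m, rfl⟩ := ht
  induction m with
  | zero => exact ⟨∅, isCliqueTiling_empty (V := (Fin 3 × Fin 3) × Fin 0) _ _⟩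
  | succ m ih =>
    obtain ⟨T, hT⟩ := ih
    obtain ⟨T₂, hT₂⟩ := exists_isCliqueTiling_blowup_gammaGraph_three_two
    rw [show m + 1 + (m + 1) = m + m + 2 by omega]
    exact hT.exists_blowup_add hT₂

/-- `Γ₃(t)` has a perfect triangle tiling if and only if `t` is even. -/
theorem stmt_8 (t : ℕ) :
    (∃ T : Finset (Finset ((Fin 3 × Fin 3) × Fin t)),
      (∀ s ∈ T, (blowup (gammaGraph 3) t).IsNClique 3 s) ∧
      (T : Set (Finset ((Fin 3 × Fin 3) × Fin t))).PairwiseDisjoint id ∧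
      ∀ v : (Fin 3 × Fin 3) × Fin t, ∃ s ∈ T, v ∈ s) ↔ Even t :=
  ⟨fun ⟨_, hT⟩ ↦ even_of_isCliqueTiling_blowup_gammaGraph_three hT,
    exists_isCliqueTiling_blowup_gammaGraph_three_of_even⟩
end

section
/- Let G be a tripartite graph with classes V1, V2, V3, each of size at least 2(1-ε)t, in which every vertex is non-adjacent to at most (1+ε)t vertices in each of the other classes. If G contains no triangle, then each class Vi has size at most 2(1+ε)t. -/
/-- A triangle-free tripartite graph in which every class has at least `2(1-ε)t`
vertices and every vertex misses at most `(1+ε)t` vertices in each other class has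
all classes of size at most `2(1+ε)t`. -/
theorem stmt_11 {V : Type*} [Fintype V] [DecidableEq V]
    (G : SimpleGraph V) [DecidableRel G.Adj]
    (P : Fin 3 → Finset V) (ε t : ℝ) (ht : 0 < t) (hε : 0 < ε) (hε' : ε < 1/3)
    (hdisj : ∀ i j, i ≠ j → Disjoint (P i) (P j))
    (hcover : ∀ v : V, ∃ i, v ∈ P i)
    (htripartite : ∀ i, ∀ u ∈ P i, ∀ v ∈ P i, ¬ G.Adj u v)
    (hlower : ∀ i, ((P i).card : ℝ) ≥ 2 * (1 - ε) * t)
    (hnonadj : ∀ i j, i ≠ j → ∀ v ∈ P i,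
      ((P j).card : ℝ) - ((P j).filter (G.Adj v)).card ≤ (1 + ε) * t)
    (htf : G.CliqueFree 3) :
    ∀ i, ((P i).card : ℝ) ≤ 2 * (1 + ε) * t := by
  intro i
  by_contra hbig
  push_neg at hbig
  have h3 : ∀ i : Fin 3, ∃ j k : Fin 3, i ≠ j ∧ i ≠ k ∧ j ≠ k := by decide
  obtain ⟨j, k, hij, hik, hjk⟩ := h3 i
  -- P j is nonempty
  have hjpos : (0 : ℝ) < (P j).card := lt_of_lt_of_le (by nlinarith) (hlower j)
  have hjne : (P j).Nonempty := Finset.card_pos.mp (by exact_mod_cast hjpos)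
  obtain ⟨v, hv⟩ := hjne
  -- v has a neighbor w in P k
  have hnk := hnonadj j k hjk v hv
  have hNpos : (0 : ℝ) < ((P k).filter (G.Adj v)).card := by
    have := hlower k
    nlinarith
  obtain ⟨w, hw⟩ := Finset.card_pos.mp (show 0 < ((P k).filter (G.Adj v)).card by
    exact_mod_cast hNpos)
  rw [Finset.mem_filter] at hw
  obtain ⟨hwk, hvw⟩ := hw
  -- common neighbor of v and w in P i
  set A := (P i).filter (G.Adj v) with hA
  set B := (P i).filter (G.Adj w) with hB
  have hAcard := hnonadj j i hij.symm v hv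
  have hBcard := hnonadj k i hik.symm w hwk
  have hunion : ((A ∪ B).card : ℝ) ≤ (P i).card := by
    exact_mod_cast Finset.card_le_card
      (Finset.union_subset (Finset.filter_subset _ _) (Finset.filter_subset _ _))
  have hsum : (A ∪ B).card + (A ∩ B).card = A.card + B.card :=
    Finset.card_union_add_card_inter A B
  have hsumR : ((A ∪ B).card : ℝ) + (A ∩ B).card = A.card + B.card := by
    exact_mod_cast hsum
  have hinter : (0 : ℝ) < (A ∩ B).card := by nlinarith
  obtain ⟨x, hx⟩ := Finset.card_pos.mp (show 0 < (A ∩ B).card by exact_mod_cast hinter)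
  rw [Finset.mem_inter, hA, hB, Finset.mem_filter, Finset.mem_filter] at hx
  exact htf {v, w, x} (SimpleGraph.is3Clique_triple_iff.mpr ⟨hvw, hx.1.2, hx.2.2⟩)
end

section
/- Let (X1, X2, X3) be a triple of vertex sets of size L each such that each pair (Xi, Xj) is ε-regular with density at least d, where d > 3ε and ε is sufficiently small relative to d (so the Blow-up Lemma applies). Then, for L sufficiently large, the tripartite graph induced on (X1, X2, X3) contains at least (1 - 2ε)L vertex-disjoint triangles. -/
/-!
Instead of the Blow-up Lemma, a greedy argument: as long as every part still has more than `2εL`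
unused vertices, the unused vertices span a triangle, so at least `L - 2εL` disjoint triangles
can be removed one after another. To find the triangle, take `a` in the first part with typical
degree into the other two; regularity excludes at most `εL` vertices per pair. The neighbourhoods
of `a` have `m₂, m₃ ≳ dεL` vertices, too few for regularity, so their edge count is controlled
by padding them with `K ≈ εL` further vertices, which costs an error `ε (m₂ + 2K)(m₃ + 2K)`;
this is smaller than the main term `d m₂ m₃` once `ε ≤ d³/32`.
-/

/-- The pair `(A, B)` is `ε`-regular. -/
def EpsRegular {V : Type*} [DecidableEq V] (G : SimpleGraph V) [DecidableRel G.Adj]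
    (ε : ℝ) (A B : Finset V) : Prop :=
  ∀ X ⊆ A, ∀ Y ⊆ B, (X.card : ℝ) > ε * A.card → (Y.card : ℝ) > ε * B.card →
    |(G.edgeDensity X Y : ℝ) - (G.edgeDensity A B : ℝ)| < ε

open Finset

theorem abs_le_mul_card_add_of_forall_lt_card {α : Type*} [DecidableEq α] {f : Finset α → ℝ}
    {A s : Finset α} {c t : ℝ} {K : ℕ}
    (hf : ∀ s₁ s₂, Disjoint s₁ s₂ → f (s₁ ∪ s₂) = f s₁ + f s₂)
    (hlarge : ∀ s ⊆ A, t < #s → |f s| ≤ c * #s) (hc : 0 ≤ c) (htK : t < K) (hKA : 2 * K ≤ #A)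
    (hs : s ⊆ A) :
    |f s| ≤ c * (#s + 2 * K) := by
  by_cases hst : t < #s
  · exact (hlarge s hs hst).trans (by gcongr; linarith)
  have hsK : #s < K := by exact_mod_cast (not_lt.1 hst).trans_lt htK
  -- pad `s` by `K` further vertices of `A`, so that both the padding and the padded set are large
  obtain ⟨P, hPA, hPK⟩ := exists_subset_card_eq (s := A \ s) (n := K)
    (by rw [card_sdiff_of_subset hs]; omega)
  have hsP : Disjoint s P := disjoint_of_subset_right hPA disjoint_sdiff
  have hPA' : P ⊆ A := hPA.trans sdiff_subset
  have hP := hlarge P hPA' (by rw [hPK]; exact htK)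
  have hsP' := hlarge (s ∪ P) (union_subset hs hPA')
    (by rw [card_union_of_disjoint hsP, hPK]; push_cast; linarith [(#s).cast_nonneg (α := ℝ)])
  rw [card_union_of_disjoint hsP, hPK] at hsP'
  rw [hPK] at hP
  rw [hf s P hsP] at hsP'
  push_cast at hsP' ⊢
  calc |f s| = |f s + f P - f P| := by ring_nf
    _ ≤ |f s + f P| + |f P| := abs_sub _ _
    _ ≤ c * (#s + K) + c * K := add_le_add hsP' hP
    _ = c * (#s + 2 * K) := by ring

namespace SimpleGraph

variable {V : Type*} {G : SimpleGraph V} [DecidableRel G.Adj]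

lemma card_interedges_eq_sum_card_filter_adj (s t : Finset V) :
    #(G.interedges s t) = ∑ v ∈ s, #{w ∈ t | G.Adj v w} := by
  simp only [interedges_def, card_filter, sum_product]

lemma card_interedges_eq_edgeDensity_mul (s t : Finset V) :
    (#(G.interedges s t) : ℝ) = G.edgeDensity s t * #s * #t := by
  rw [edgeDensity_def]
  push_cast
  rcases eq_or_ne ((#s : ℝ) * #t) 0 with h | h
  · have : #(G.interedges s t) = 0 := by
      have := G.card_interedges_le_mul s t
      have : #s * #t = 0 := by exact_mod_cast h
      omega
    simp [this]
  · rw [mul_assoc, div_mul_cancel₀ _ h]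

variable [DecidableEq V]

lemma card_interedges_union_left {s₁ s₂ : Finset V} (h : Disjoint s₁ s₂) (t : Finset V) :
    #(G.interedges (s₁ ∪ s₂) t) = #(G.interedges s₁ t) + #(G.interedges s₂ t) := by
  rw [← card_union_of_disjoint (G.interedges_disjoint_left h t), interedges_def, union_product,
    filter_union]
  rfl

lemma card_interedges_union_right (s : Finset V) {t₁ t₂ : Finset V} (h : Disjoint t₁ t₂) :
    #(G.interedges s (t₁ ∪ t₂)) = #(G.interedges s t₁) + #(G.interedges s t₂) := by
  rw [← card_union_of_disjoint (G.interedges_disjoint_right s h), interedges_def, product_union,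
    filter_union]
  rfl

end SimpleGraph

namespace EpsRegular

variable {V : Type*} [DecidableEq V] {G : SimpleGraph V} [DecidableRel G.Adj] {ε : ℝ}
  {A B S T : Finset V}

lemma abs_card_interedges_sub_lt (h : EpsRegular G ε A B) (hε : 0 ≤ ε) (hS : S ⊆ A)
    (hT : T ⊆ B) (hSc : ε * #A < #S) (hTc : ε * #B < #T) :
    |(#(G.interedges S T) : ℝ) - G.edgeDensity A B * #S * #T| < ε * (#S * #T) := by
  have hST : (0 : ℝ) < #S * #T :=
    mul_pos ((by positivity : (0 : ℝ) ≤ ε * #A).trans_lt hSc)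
      ((by positivity : (0 : ℝ) ≤ ε * #B).trans_lt hTc)
  rw [G.card_interedges_eq_edgeDensity_mul, mul_assoc, mul_assoc, ← sub_mul, abs_mul,
    abs_of_pos hST]
  exact mul_lt_mul_of_pos_right (h S hS T hT hSc hTc) hST

lemma abs_card_interedges_sub_le (h : EpsRegular G ε A B) (hε : 0 ≤ ε) {K : ℕ}
    (hAK : ε * #A < K) (hBK : ε * #B < K) (hKA : 2 * K ≤ #A) (hKB : 2 * K ≤ #B)
    (hS : S ⊆ A) (hT : T ⊆ B) :
    |(#(G.interedges S T) : ℝ) - G.edgeDensity A B * #S * #T|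
      ≤ ε * ((#S + 2 * K) * (#T + 2 * K)) := by
  have hlargeT : ∀ T ⊆ B, ε * #B < #T → ∀ S ⊆ A,
      |(#(G.interedges S T) : ℝ) - G.edgeDensity A B * #S * #T| ≤ ε * #T * (#S + 2 * K) :=
    fun T hT hTc S hS =>
      abs_le_mul_card_add_of_forall_lt_card
        (f := fun S => (#(G.interedges S T) : ℝ) - G.edgeDensity A B * #S * #T) (c := ε * #T)
        (fun s₁ s₂ h₁₂ => by
          simp only [G.card_interedges_union_left h₁₂, card_union_of_disjoint h₁₂]
          push_cast
          ring)
        (fun S hS hSc => (h.abs_card_interedges_sub_lt hε hS hT hSc hTc).le.trans_eq (by ring))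
        (by positivity) hAK hKA hS
  exact (abs_le_mul_card_add_of_forall_lt_card
    (f := fun T => (#(G.interedges S T) : ℝ) - G.edgeDensity A B * #S * #T)
    (c := ε * (#S + 2 * K))
    (fun t₁ t₂ h₁₂ => by
      simp only [G.card_interedges_union_right S h₁₂, card_union_of_disjoint h₁₂]
      push_cast
      ring)
    (fun T hT hTc => (hlargeT T hT hTc S hS).trans_eq (by ring))
    (by positivity) hBK hKB hT).trans_eq (by ring)

lemma card_filter_card_filter_adj_le (h : EpsRegular G ε A B) (hε : 0 ≤ ε) {Y Z : Finset V}
    (hY : Y ⊆ A) (hZ : Z ⊆ B) (hZc : ε * #B < #Z) :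
    (#{v ∈ Y | (#{w ∈ Z | G.Adj v w} : ℝ) ≤ (G.edgeDensity A B - ε) * #Z} : ℝ) ≤ ε * #A := by
  set bad := {v ∈ Y | (#{w ∈ Z | G.Adj v w} : ℝ) ≤ (G.edgeDensity A B - ε) * #Z}
  by_contra! hbad
  have hcount := h.abs_card_interedges_sub_lt hε ((filter_subset _ _).trans hY) hZ hbad hZc
  have hsum : (#(G.interedges bad Z) : ℝ) ≤ ∑ _v ∈ bad, (G.edgeDensity A B - ε) * #Z := by
    rw [G.card_interedges_eq_sum_card_filter_adj]
    push_cast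
    exact sum_le_sum fun v hv => (mem_filter.1 hv).2
  rw [sum_const, nsmul_eq_mul] at hsum
  linarith [(abs_lt.1 hcount).1]

end EpsRegular

lemma mul_add_mul_add_lt_mul_mul {ε d d' s k m₂ m₃ : ℝ} (hd : 0 < d) (hd1 : d ≤ 1) (hdd' : d ≤ d')
    (hε0 : 0 ≤ ε) (hε : 32 * ε ≤ d ^ 3) (hs : 0 ≤ s) (hk : 0 ≤ k) (hks : k ≤ 3 * s)
    (hm₂ : d * s < m₂) (hm₃ : d * s < m₃) :
    ε * ((m₂ + k) * (m₃ + k)) < d' * (m₂ * m₃) := by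
  have hm₂0 : 0 < m₂ := (by positivity : 0 ≤ d * s).trans_lt hm₂
  have hm₃0 : 0 < m₃ := (by positivity : 0 ≤ d * s).trans_lt hm₃
  have h₂ : d * (m₂ + k) ≤ 4 * m₂ := by nlinarith
  have h₃ : d * (m₃ + k) ≤ 4 * m₃ := by nlinarith
  refine lt_of_mul_lt_mul_left ?_ (sq_nonneg d)
  calc d ^ 2 * (ε * ((m₂ + k) * (m₃ + k))) = ε * ((d * (m₂ + k)) * (d * (m₃ + k))) := by ring
    _ ≤ ε * ((4 * m₂) * (4 * m₃)) := by gcongr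
    _ ≤ d ^ 3 / 2 * (m₂ * m₃) := by nlinarith [mul_pos hm₂0 hm₃0]
    _ < d ^ 3 * (m₂ * m₃) := by nlinarith [mul_pos hm₂0 hm₃0, pow_pos hd 3]
    _ ≤ d ^ 2 * (d' * (m₂ * m₃)) := by
      rw [pow_succ, mul_assoc]
      gcongr

namespace SimpleGraph

variable {V : Type*} [DecidableEq V] {G : SimpleGraph V} [DecidableRel G.Adj]

lemma exists_mem_lt_card_filter_adj {ε : ℝ} {A B C Y₁ Y₂ Y₃ : Finset V}
    (hAB : EpsRegular G ε A B) (hAC : EpsRegular G ε A C) (hε : 0 ≤ ε)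
    (hY₁ : Y₁ ⊆ A) (hY₂ : Y₂ ⊆ B) (hY₃ : Y₃ ⊆ C) (hY₁c : 2 * (ε * #A) < #Y₁)
    (hY₂c : ε * #B < #Y₂) (hY₃c : ε * #C < #Y₃) :
    ∃ a ∈ Y₁, (G.edgeDensity A B - ε) * #Y₂ < #{w ∈ Y₂ | G.Adj a w} ∧
      (G.edgeDensity A C - ε) * #Y₃ < #{w ∈ Y₃ | G.Adj a w} := by
  have hbadB := hAB.card_filter_card_filter_adj_le hε hY₁ hY₂ hY₂c
  have hbadC := hAC.card_filter_card_filter_adj_le hε hY₁ hY₃ hY₃c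
  by_contra! htypical
  have hsub : Y₁ ⊆ {v ∈ Y₁ | (#{w ∈ Y₂ | G.Adj v w} : ℝ) ≤ (G.edgeDensity A B - ε) * #Y₂} ∪
      {v ∈ Y₁ | (#{w ∈ Y₃ | G.Adj v w} : ℝ) ≤ (G.edgeDensity A C - ε) * #Y₃} := by
    intro v hv
    by_cases hvB : (G.edgeDensity A B - ε) * #Y₂ < #{w ∈ Y₂ | G.Adj v w}
    · exact mem_union_right _ (mem_filter.2 ⟨hv, htypical v hv hvB⟩)
    · exact mem_union_left _ (mem_filter.2 ⟨hv, not_lt.1 hvB⟩)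
  have hcard := (Nat.cast_le (α := ℝ)).2 ((card_le_card hsub).trans (card_union_le _ _))
  push_cast at hcard
  linarith

lemma exists_triangle_of_epsRegular {A B C Y₁ Y₂ Y₃ : Finset V} {L : ℕ} {ε d : ℝ}
    (hAB : EpsRegular G ε A B) (hAC : EpsRegular G ε A C) (hBC : EpsRegular G ε B C)
    (hdAB : d ≤ G.edgeDensity A B) (hdAC : d ≤ G.edgeDensity A C)
    (hdBC : d ≤ G.edgeDensity B C) (hA : #A = L) (hB : #B = L) (hC : #C = L)
    (hε : 0 < ε) (hεd : 32 * ε ≤ d ^ 3) (hεL : 2 ≤ ε * L)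
    (hY₁ : Y₁ ⊆ A) (hY₂ : Y₂ ⊆ B) (hY₃ : Y₃ ⊆ C) (hY₁c : 2 * (ε * L) < #Y₁)
    (hY₂c : 2 * (ε * L) < #Y₂) (hY₃c : 2 * (ε * L) < #Y₃) :
    ∃ a ∈ Y₁, ∃ b ∈ Y₂, ∃ c ∈ Y₃, G.Adj a b ∧ G.Adj a c ∧ G.Adj b c := by
  have hd1 : d ≤ 1 := hdAB.trans (by exact_mod_cast G.edgeDensity_le_one A B)
  have hd : 0 < d := by
    by_contra! hd
    nlinarith [mul_nonpos_of_nonpos_of_nonneg hd (sq_nonneg d)]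
  have hd3 : d ^ 3 ≤ d := pow_le_of_le_one hd.le hd1 (by norm_num)
  have h2εd : 2 * ε ≤ d := by linarith
  have hεLnn : 0 ≤ ε * L := by positivity
  obtain ⟨a, ha, haB, haC⟩ := exists_mem_lt_card_filter_adj hAB hAC hε.le hY₁ hY₂ hY₃
    (by rw [hA]; linarith) (by rw [hB]; linarith) (by rw [hC]; linarith)
  set N₂ := {w ∈ Y₂ | G.Adj a w}
  set N₃ := {w ∈ Y₃ | G.Adj a w}
  have hN₂ : d * (ε * L) < #N₂ := by nlinarith
  have hN₃ : d * (ε * L) < #N₃ := by nlinarith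
  set K := ⌊ε * L⌋₊ + 1
  have hK : ε * L < K := by simpa [K] using Nat.lt_floor_add_one (ε * L)
  have hK' : (K : ℝ) ≤ ε * L + 1 := by simpa [K] using Nat.floor_le hεLnn
  have hKL : 2 * K ≤ L := by
    have : (2 * K : ℝ) ≤ L := by
      nlinarith [mul_nonneg (by linarith : 0 ≤ 1 - 3 * ε) (L.cast_nonneg (α := ℝ))]
    exact_mod_cast this
  have hcount := hBC.abs_card_interedges_sub_le hε.le (K := K) (by rwa [hB]) (by rwa [hC])
    (by rwa [hB]) (by rwa [hC]) (S := N₂) (T := N₃)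
    ((filter_subset _ _).trans hY₂) ((filter_subset _ _).trans hY₃)
  have herror := mul_add_mul_add_lt_mul_mul (k := 2 * K) hd hd1 hdBC hε.le hεd hεLnn
    (by positivity) (by linarith) hN₂ hN₃
  obtain ⟨⟨b, c⟩, hbc⟩ : (G.interedges N₂ N₃).Nonempty := by
    rw [← card_pos, ← Nat.cast_pos (α := ℝ)]
    linarith [(abs_le.1 hcount).1]
  simp only [mk_mem_interedges_iff, N₂, N₃, mem_filter] at hbc
  exact ⟨a, ha, b, hbc.1.1, c, hbc.2.1.1, hbc.1.2, hbc.2.1.2, hbc.2.2⟩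

end SimpleGraph

namespace Finset

variable {α ι : Type*} [DecidableEq α]

lemma image_univ_inter_eq_singleton [Fintype ι] {X : ι → Finset α}
    (hX : Pairwise fun i j => Disjoint (X i) (X j)) {v : ι → α} (hv : ∀ i, v i ∈ X i) (i : ι) :
    univ.image v ∩ X i = {v i} := by
  ext x
  simp only [mem_inter, mem_image, mem_univ, true_and, mem_singleton]
  constructor
  · rintro ⟨⟨j, rfl⟩, hj⟩
    by_contra hji
    exact disjoint_left.1 (hX fun hij => hji (congrArg v hij)) (hv j) hj
  · rintro rfl
    exact ⟨⟨i, rfl⟩, hv i⟩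

/-- Greedy extraction: removing a set that meets every `X i` exactly once lowers each
`#(U ∩ X i)` by exactly one. -/
lemma exists_pairwiseDisjoint_of_forall_exists_subset [Nonempty ι] (X : ι → Finset α)
    (P : Finset α → Prop) (hP : ∀ s, P s → ∀ i, #(s ∩ X i) = 1) (m : ℕ)
    (hex : ∀ U : Finset α, (∀ i, m < #(U ∩ X i)) → ∃ s ⊆ U, P s) (n : ℕ) (U : Finset α)
    (hU : ∀ i, n ≤ #(U ∩ X i)) :
    ∃ T : Finset (Finset α), n ≤ #T + m ∧ (∀ s ∈ T, P s ∧ s ⊆ U) ∧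
      (T : Set (Finset α)).PairwiseDisjoint id := by
  induction n generalizing U with
  | zero => exact ⟨∅, by simp, by simp, by simp⟩
  | succ n ih =>
    by_cases hnm : n + 1 ≤ m
    · exact ⟨∅, by simpa, by simp, by simp⟩
    obtain ⟨s, hsU, hs⟩ := hex U fun i => by have := hU i; omega
    have hcard : ∀ i, #((U \ s) ∩ X i) + 1 = #(U ∩ X i) := fun i => by
      rw [← hP s hs i, sdiff_inter_right_comm, ← card_sdiff_add_card_inter (U ∩ X i) s,
        inter_right_comm, inter_eq_right.2 hsU]
    obtain ⟨T, hT, hTU, hTd⟩ := ih (U \ s) fun i => by have := hcard i; have := hU i; omega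
    have hsT : s ∉ T := fun hsT => by
      have hss := disjoint_self.1 (subset_sdiff.1 (hTU s hsT).2).2
      simpa [hss] using hP s hs (Classical.arbitrary ι)
    refine ⟨insert s T, by rw [card_insert_of_notMem hsT]; omega, ?_, ?_⟩
    · refine forall_mem_insert _ _ _ |>.2 ⟨⟨hs, hsU⟩, fun t ht => ⟨(hTU t ht).1, ?_⟩⟩
      exact (hTU t ht).2.trans sdiff_subset
    · rw [coe_insert]
      exact hTd.insert fun t ht _ => (subset_sdiff.1 (hTU t ht).2).2.symm

end Finset

lemma SimpleGraph.exists_transversal_triangle_of_epsRegular {V : Type*} [DecidableEq V]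
    {G : SimpleGraph V} [DecidableRel G.Adj] {X : Fin 3 → Finset V} {L : ℕ} {ε d : ℝ}
    (hX : Pairwise fun i j => Disjoint (X i) (X j)) (hXL : ∀ i, #(X i) = L)
    (hreg : ∀ i j, i ≠ j → EpsRegular G ε (X i) (X j) ∧ d ≤ G.edgeDensity (X i) (X j))
    (hε : 0 < ε) (hεd : 32 * ε ≤ d ^ 3) (hεL : 2 ≤ ε * L) {U : Finset V}
    (hU : ∀ i, 2 * (ε * L) < #(U ∩ X i)) :
    ∃ s ⊆ U, G.IsNClique 3 s ∧ ∀ i, #(s ∩ X i) = 1 := by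
  obtain ⟨a, ha, b, hb, c, hc, hab, hac, hbc⟩ := exists_triangle_of_epsRegular
    (hreg 0 1 (by decide)).1 (hreg 0 2 (by decide)).1 (hreg 1 2 (by decide)).1
    (hreg 0 1 (by decide)).2 (hreg 0 2 (by decide)).2 (hreg 1 2 (by decide)).2
    (hXL 0) (hXL 1) (hXL 2) hε hεd hεL inter_subset_right inter_subset_right
    inter_subset_right (hU 0) (hU 1) (hU 2)
  have habc : ({a, b, c} : Finset V) = univ.image ![a, b, c] := by
    ext
    simp [Fin.exists_fin_succ, eq_comm]
  refine ⟨{a, b, c}, ?_, is3Clique_triple_iff.2 ⟨hab, hac, hbc⟩, fun i => ?_⟩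
  · simp only [insert_subset_iff, singleton_subset_iff]
    exact ⟨mem_of_mem_inter_left ha, mem_of_mem_inter_left hb, mem_of_mem_inter_left hc⟩
  · rw [habc, image_univ_inter_eq_singleton hX (v := ![a, b, c]) (fun i => by
      fin_cases i
      exacts [mem_of_mem_inter_right ha, mem_of_mem_inter_right hb,
        mem_of_mem_inter_right hc]), card_singleton]

/-- A triple of pairwise `ε`-regular pairs of density at least `d > 3ε` contains at
least `(1 - 2ε)L` vertex-disjoint triangles, one vertex in each part. -/
theorem stmt_19 : ∀ d : ℝ, 0 < d → ∃ ε0 : ℝ, 0 < ε0 ∧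
    ∀ ε : ℝ, 0 < ε → ε ≤ ε0 → 3 * ε < d →
    ∃ L0 : ℕ, ∀ L ≥ L0,
    ∀ (V : Type) [Fintype V] [DecidableEq V] (G : SimpleGraph V),
    ∀ [DecidableRel G.Adj], ∀ X : Fin 3 → Finset V,
    (∀ i j, i ≠ j → Disjoint (X i) (X j)) →
    (∀ i, (X i).card = L) →
    (∀ i j, i ≠ j → EpsRegular G ε (X i) (X j) ∧
      (G.edgeDensity (X i) (X j) : ℝ) ≥ d) →
    ∃ T : Finset (Finset V), ((T.card : ℝ) ≥ (1 - 2 * ε) * L) ∧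
      (∀ s ∈ T, G.IsNClique 3 s ∧ ∀ i, (s ∩ X i).card = 1) ∧
      (T : Set (Finset V)).PairwiseDisjoint id := by
  intro d hd
  refine ⟨d ^ 3 / 32, by positivity, fun ε hε hεd _ => ⟨⌈2 / ε⌉₊, ?_⟩⟩
  intro L hL V _ _ G _ X hX hXL hreg
  have hεL : 2 ≤ ε * L := by
    have := (div_le_iff₀ hε).1 (Nat.ceil_le.1 hL)
    linarith
  obtain ⟨T, hT, hTP, hTd⟩ := exists_pairwiseDisjoint_of_forall_exists_subset X _
    (fun s hs => hs.2) ⌊2 * (ε * L)⌋₊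
    (fun U hU => G.exists_transversal_triangle_of_epsRegular hX hXL hreg hε (by linarith) hεL
      fun i => Nat.lt_of_floor_lt (hU i))
    L univ (by simp [hXL])
  refine ⟨T, ?_, fun s hs => (hTP s hs).1, hTd⟩
  have hfloor := Nat.floor_le (by positivity : 0 ≤ 2 * (ε * L))
  have hT' : (L : ℝ) ≤ #T + ⌊2 * (ε * L)⌋₊ := by exact_mod_cast hT
  linarith
end
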